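/- arXiv:2412.03627 — 6 statements merged into one kernel-verified Lean document; each statement's English description precedes it below -/
import Mathlib

section
/- If L₁ and L₂ are disjoint finite lattices and (a,b) is a pair in L₁ with a < b and a not covered by b (a ⊀ b), then the adjunct L = L₁ ]ᵇₐ L₂ is a lattice containing L₁ and L₂ as sublattices, and |E(L)| = |E(L₁)| + |E(L₂)| + 2. -/
/-!
Joins and meets in `L₁ ]ᵇₐ L₂` are computed casewise: for `x ∈ L₁`, `y ∈ L₂` the join is `y`
if `x ≤ a` and `x ⊔ b` otherwise, and dually the meet is `y` if `b ≤ x` and `x ⊓ a` otherwise.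
Covers inside `L₂` stay covers, since nothing of `L₁` lies between two elements of `L₂`.
Covers `x ⋖ y` inside `L₁` stay covers because `a ⊀ b`: an element of `L₂` between them would
force `x ≤ a < b ≤ y`, hence `a ⋖ b`. The only mixed covers are `a ⋖ ⊥` and `⊤ ⋖ b` (with `⊥`,
`⊤` those of `L₂`), which accounts for the `+ 2`.
-/

/-- The number of covering edges of a finite ordered set. -/
noncomputable def edgeCount (α : Type*) [Preorder α] : ℕ :=
  Nat.card {p : α × α // p.1 ⋖ p.2}

/-- The order of the adjunct `L₁ ]ᵇₐ L₂` on the disjoint union `α ⊕ β`. -/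
def adjLE {α β : Type*} [Lattice α] [Lattice β] (a b : α) : α ⊕ β → α ⊕ β → Prop
  | Sum.inl x, Sum.inl y => x ≤ y
  | Sum.inr x, Sum.inr y => x ≤ y
  | Sum.inl x, Sum.inr _ => x ≤ a
  | Sum.inr _, Sum.inl y => b ≤ y

/-- The covering relation of a partial-order relation `r`. -/
def relCovBy {γ : Type*} (r : γ → γ → Prop) (x y : γ) : Prop :=
  r x y ∧ x ≠ y ∧ ∀ z, r x z → r z y → z = x ∨ z = y

section

open Sum

variable {α β : Type*} [Lattice α] [Lattice β] {a b : α}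

theorem adjLE_refl (x : α ⊕ β) : adjLE a b x x := by
  rcases x with x | x <;> exact le_rfl

theorem adjLE_trans (hab : a < b) {x y z : α ⊕ β} (hxy : adjLE a b x y) (hyz : adjLE a b y z) :
    adjLE a b x z := by
  rcases x with x | x <;> rcases y with y | y <;> rcases z with z | z <;>
    simp only [adjLE] at * <;> order

theorem adjLE_antisymm (hab : a < b) {x y : α ⊕ β} (hxy : adjLE a b x y)
    (hyx : adjLE a b y x) : x = y := by
  rcases x with x | x <;> rcases y with y | y <;>
    simp only [adjLE, inl.injEq, inr.injEq, reduceCtorEq] at * <;> order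

open scoped Classical in
noncomputable def adjSup (a b : α) : α ⊕ β → α ⊕ β → α ⊕ β
  | inl x, inl y => inl (x ⊔ y)
  | inr x, inr y => inr (x ⊔ y)
  | inl x, inr y => if x ≤ a then inr y else inl (x ⊔ b)
  | inr x, inl y => if y ≤ a then inr x else inl (y ⊔ b)

open scoped Classical in
noncomputable def adjInf (a b : α) : α ⊕ β → α ⊕ β → α ⊕ β
  | inl x, inl y => inl (x ⊓ y)
  | inr x, inr y => inr (x ⊓ y)
  | inl x, inr y => if b ≤ x then inr y else inl (x ⊓ a)
  | inr x, inl y => if b ≤ y then inr x else inl (y ⊓ a)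

theorem adjLE_adjSup_left (x y : α ⊕ β) : adjLE a b x (adjSup a b x y) := by
  rcases x with x | x <;> rcases y with y | y <;> simp only [adjSup] <;> (try split_ifs) <;>
    simp only [adjLE] at * <;> order

theorem adjLE_adjSup_right (x y : α ⊕ β) : adjLE a b y (adjSup a b x y) := by
  rcases x with x | x <;> rcases y with y | y <;> simp only [adjSup] <;> (try split_ifs) <;>
    simp only [adjLE] at * <;> order

theorem adjSup_adjLE {x y z : α ⊕ β} (hxz : adjLE a b x z) (hyz : adjLE a b y z) :
    adjLE a b (adjSup a b x y) z := by
  rcases x with x | x <;> rcases y with y | y <;> rcases z with z | z <;> simp only [adjSup] <;>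
    (try split_ifs) <;> simp only [adjLE] at * <;> order

theorem adjInf_adjLE_left (x y : α ⊕ β) : adjLE a b (adjInf a b x y) x := by
  rcases x with x | x <;> rcases y with y | y <;> simp only [adjInf] <;> (try split_ifs) <;>
    simp only [adjLE] at * <;> order

theorem adjInf_adjLE_right (x y : α ⊕ β) : adjLE a b (adjInf a b x y) y := by
  rcases x with x | x <;> rcases y with y | y <;> simp only [adjInf] <;> (try split_ifs) <;>
    simp only [adjLE] at * <;> order

theorem adjLE_adjInf {x y z : α ⊕ β} (hxy : adjLE a b x y) (hxz : adjLE a b x z) :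
    adjLE a b x (adjInf a b y z) := by
  rcases x with x | x <;> rcases y with y | y <;> rcases z with z | z <;> simp only [adjInf] <;>
    (try split_ifs) <;> simp only [adjLE] at * <;> order

noncomputable abbrev adjLattice (hab : a < b) : Lattice (α ⊕ β) where
  le := adjLE a b
  lt x y := adjLE a b x y ∧ ¬ adjLE a b y x
  le_refl := adjLE_refl
  le_trans _ _ _ := adjLE_trans hab
  le_antisymm _ _ := adjLE_antisymm hab
  sup := adjSup a b
  le_sup_left := adjLE_adjSup_left
  le_sup_right := adjLE_adjSup_right
  sup_le _ _ _ := adjSup_adjLE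
  inf := adjInf a b
  inf_le_left := adjInf_adjLE_left
  inf_le_right := adjInf_adjLE_right
  le_inf _ _ _ := adjLE_adjInf

theorem relCovBy_adjLE_inl_inl (hab : a < b) (hnc : ¬ a ⋖ b) {x y : α} :
    relCovBy (adjLE (β := β) a b) (inl x) (inl y) ↔ x ⋖ y := by
  constructor
  · rintro ⟨hxy, hne, hbetween⟩
    refine covBy_iff_lt_and_eq_or_eq.2 ⟨hxy.lt_of_ne (by simpa using hne), fun c hxc hcy => ?_⟩
    simpa using hbetween (inl c) hxc hcy
  · intro hxy
    refine ⟨hxy.le, by simpa using hxy.ne, ?_⟩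
    rintro (c | c) hxc hcy
    · simpa using (covBy_iff_lt_and_eq_or_eq.1 hxy).2 c hxc hcy
    · exact absurd ((hxy.of_le_of_lt hxc (hab.trans_le hcy)).of_lt_of_le hab hcy) hnc

theorem relCovBy_adjLE_inr_inr (hab : a < b) {x y : β} :
    relCovBy (adjLE a b) (inr x) (inr y) ↔ x ⋖ y := by
  constructor
  · rintro ⟨hxy, hne, hbetween⟩
    refine covBy_iff_lt_and_eq_or_eq.2 ⟨hxy.lt_of_ne (by simpa using hne), fun c hxc hcy => ?_⟩
    simpa using hbetween (inr c) hxc hcy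
  · intro hxy
    refine ⟨hxy.le, by simpa using hxy.ne, ?_⟩
    rintro (c | c) hxc hcy
    · exact absurd (hxc.trans hcy) hab.not_ge
    · simpa using (covBy_iff_lt_and_eq_or_eq.1 hxy).2 c hxc hcy

theorem relCovBy_adjLE_inl_inr [OrderBot β] {x : α} {y : β} :
    relCovBy (adjLE a b) (inl x) (inr y) ↔ x = a ∧ y = ⊥ := by
  constructor
  · rintro ⟨hxa, -, hbetween⟩
    constructor
    · simpa [eq_comm] using hbetween (inl a) hxa le_rfl
    · simpa [eq_comm] using hbetween (inr ⊥) hxa bot_le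
  · rintro ⟨rfl, rfl⟩
    refine ⟨le_rfl, inl_ne_inr, ?_⟩
    rintro (c | c) hxc hcy
    · exact Or.inl (congrArg inl (le_antisymm hcy hxc))
    · exact Or.inr (congrArg inr (le_bot_iff.1 hcy))

theorem relCovBy_adjLE_inr_inl [OrderTop β] {x : β} {y : α} :
    relCovBy (adjLE a b) (inr x) (inl y) ↔ x = ⊤ ∧ y = b := by
  constructor
  · rintro ⟨hby, -, hbetween⟩
    constructor
    · simpa [eq_comm] using hbetween (inr ⊤) le_top hby
    · simpa [eq_comm] using hbetween (inl b) le_rfl hby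
  · rintro ⟨rfl, rfl⟩
    refine ⟨le_rfl, inr_ne_inl, ?_⟩
    rintro (c | c) hxc hcy
    · exact Or.inr (congrArg inl (le_antisymm hcy hxc))
    · exact Or.inl (congrArg inr (top_le_iff.1 hxc))

def adjCovByEquiv [BoundedOrder β] (hab : a < b) (hnc : ¬ a ⋖ b) :
    {p : (α ⊕ β) × (α ⊕ β) // relCovBy (adjLE a b) p.1 p.2} ≃
      ({p : α × α // p.1 ⋖ p.2} ⊕ {p : β × β // p.1 ⋖ p.2}) ⊕ Bool where
  toFun
    | ⟨(inl x, inl y), h⟩ => inl (inl ⟨(x, y), (relCovBy_adjLE_inl_inl hab hnc).1 h⟩)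
    | ⟨(inr x, inr y), h⟩ => inl (inr ⟨(x, y), (relCovBy_adjLE_inr_inr hab).1 h⟩)
    | ⟨(inl _, inr _), _⟩ => inr true
    | ⟨(inr _, inl _), _⟩ => inr false
  invFun
    | inl (inl ⟨(x, y), h⟩) => ⟨(inl x, inl y), (relCovBy_adjLE_inl_inl hab hnc).2 h⟩
    | inl (inr ⟨(x, y), h⟩) => ⟨(inr x, inr y), (relCovBy_adjLE_inr_inr hab).2 h⟩
    | inr true => ⟨(inl a, inr ⊥), relCovBy_adjLE_inl_inr.2 ⟨rfl, rfl⟩⟩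
    | inr false => ⟨(inr ⊤, inl b), relCovBy_adjLE_inr_inl.2 ⟨rfl, rfl⟩⟩
  left_inv := by
    rintro ⟨⟨x | x, y | y⟩, h⟩
    · rfl
    · obtain ⟨rfl, rfl⟩ := relCovBy_adjLE_inl_inr.1 h; rfl
    · obtain ⟨rfl, rfl⟩ := relCovBy_adjLE_inr_inl.1 h; rfl
    · rfl
  right_inv := by
    rintro ((⟨⟨x, y⟩, h⟩ | ⟨⟨x, y⟩, h⟩) | (_ | _)) <;> rfl

end

theorem stmt_5_general {α β : Type*} [Lattice α] [Lattice β] [Fintype α] [Fintype β]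
    [Nonempty β] (a b : α) (hab : a < b) (hnc : ¬ a ⋖ b) :
    (∃ s : Lattice (α ⊕ β),
      (∀ x y : α ⊕ β, s.le x y ↔ adjLE a b x y) ∧
      (∀ x y : α, s.sup (Sum.inl x) (Sum.inl y) = Sum.inl (x ⊔ y) ∧
        s.inf (Sum.inl x) (Sum.inl y) = Sum.inl (x ⊓ y)) ∧
      (∀ x y : β, s.sup (Sum.inr x) (Sum.inr y) = Sum.inr (x ⊔ y) ∧
        s.inf (Sum.inr x) (Sum.inr y) = Sum.inr (x ⊓ y))) ∧
    Nat.card {p : (α ⊕ β) × (α ⊕ β) // relCovBy (adjLE a b) p.1 p.2} =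
      edgeCount α + edgeCount β + 2 := by
  let : BoundedOrder β := Fintype.toBoundedOrder β
  refine ⟨⟨adjLattice hab, fun _ _ => Iff.rfl, fun _ _ => ⟨rfl, rfl⟩, fun _ _ => ⟨rfl, rfl⟩⟩, ?_⟩
  rw [Nat.card_congr (adjCovByEquiv hab hnc), Nat.card_sum, Nat.card_sum,
    Nat.card_eq_fintype_card (α := Bool), Fintype.card_bool]
  rfl

/-- If `L₁, L₂` are disjoint finite lattices and `a < b` in `L₁` with `a ⊀ b`, then the
adjunct `L₁ ]ᵇₐ L₂` is a lattice containing `L₁` and `L₂` as sublattices, and its number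
of covering edges is `|E(L₁)| + |E(L₂)| + 2`. -/
theorem stmt_5 {α β : Type*} [Lattice α] [Lattice β] [Fintype α] [Fintype β]
    [Nonempty α] [Nonempty β] (a b : α) (hab : a < b) (hnc : ¬ a ⋖ b) :
    (∃ s : Lattice (α ⊕ β),
      (∀ x y : α ⊕ β, s.le x y ↔ adjLE a b x y) ∧
      (∀ x y : α, s.sup (Sum.inl x) (Sum.inl y) = Sum.inl (x ⊔ y) ∧
        s.inf (Sum.inl x) (Sum.inl y) = Sum.inl (x ⊓ y)) ∧
      (∀ x y : β, s.sup (Sum.inr x) (Sum.inr y) = Sum.inr (x ⊔ y) ∧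
        s.inf (Sum.inr x) (Sum.inr y) = Sum.inr (x ⊓ y))) ∧
    Nat.card {p : (α ⊕ β) × (α ⊕ β) // relCovBy (adjLE a b) p.1 p.2} =
      edgeCount α + edgeCount β + 2 :=
  stmt_5_general a b hab hnc
end

section
/- If L₁ and L₂ are disjoint finite lattices and (a,b) a pair of elements of L₁ with a < b and a ⊀ b, then the nullity of the adjunct satisfies η(L₁ ]ᵇₐ L₂) = η(L₁) + η(L₂) + 1. -/
/-- The nullity of a finite lattice: (number of covering edges) − (number of elements) + 1. -/
noncomputable def nullity (α : Type*) [Preorder α] : ℤ :=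
  (edgeCount α : ℤ) - Nat.card α + 1

/-!
The covers of `L₁ ]ᵇₐ L₂` are those of `L₁`, those of `L₂`, and the two new edges `a ⋖ ⊥₂`,
`⊤₂ ⋖ b`. A cover `x ⋖ y` of `L₁` could only be broken by `L₂` if `x ≤ a < b ≤ y`, which forces
`x = a`, `y = b`, excluded by `a ⊀ b`; a cover of `L₂` could only be broken by some `z` with
`b ≤ z ≤ a`, excluded by `a < b`. Thus the adjunct has two more edges than `L₁` and `L₂` together
and exactly their elements, so its nullity is `η(L₁) + η(L₂) + 1`.
-/

namespace Adjunct

variable {α β : Type*} [Lattice α] [Lattice β] {a b : α}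

theorem relCovBy_inl_inl_iff (hab : a < b) (hnc : ¬ a ⋖ b) {x y : α} :
    relCovBy (adjLE a b) (Sum.inl x : α ⊕ β) (Sum.inl y) ↔ x ⋖ y := by
  constructor
  · rintro ⟨hxy, hne, hbetween⟩
    refine covBy_iff_lt_and_eq_or_eq.mpr ⟨lt_of_le_of_ne hxy (by rintro rfl; exact hne rfl),
      fun z hxz hzy => ?_⟩
    simpa using hbetween (Sum.inl z) hxz hzy
  · intro hcov
    refine ⟨hcov.le, by simpa using hcov.ne, ?_⟩
    rintro (z | z) hxz hzy
    · simpa using hcov.eq_or_eq hxz hzy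
    · change x ≤ a at hxz
      change b ≤ y at hzy
      have hxa : a = x := (hcov.eq_or_eq hxz (hab.le.trans hzy)).resolve_right
        (hab.trans_le hzy).ne
      have hyb : b = y := (hcov.eq_or_eq (hxa ▸ hab.le) hzy).resolve_left
        (hxa ▸ hab).ne'
      exact absurd (hxa ▸ hyb ▸ hcov) hnc

theorem relCovBy_inr_inr_iff (hba : ¬ b ≤ a) {x y : β} :
    relCovBy (adjLE a b) (Sum.inr x : α ⊕ β) (Sum.inr y) ↔ x ⋖ y := by
  constructor
  · rintro ⟨hxy, hne, hbetween⟩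
    refine covBy_iff_lt_and_eq_or_eq.mpr ⟨lt_of_le_of_ne hxy (by rintro rfl; exact hne rfl),
      fun z hxz hzy => ?_⟩
    simpa using hbetween (Sum.inr z) hxz hzy
  · intro hcov
    refine ⟨hcov.le, by simpa using hcov.ne, ?_⟩
    rintro (z | z) hxz hzy
    · exact absurd (le_trans (hxz : b ≤ z) (hzy : z ≤ a)) hba
    · simpa using hcov.eq_or_eq hxz hzy

theorem relCovBy_inl_inr_iff [OrderBot β] {x : α} {y : β} :
    relCovBy (adjLE a b) (Sum.inl x : α ⊕ β) (Sum.inr y) ↔ x = a ∧ y = ⊥ := by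
  constructor
  · rintro ⟨hxa, -, hbetween⟩
    refine ⟨?_, ?_⟩
    · simpa [eq_comm] using hbetween (Sum.inl a) hxa (le_refl a)
    · simpa [eq_comm] using hbetween (Sum.inr ⊥) hxa (bot_le : ⊥ ≤ y)
  · rintro ⟨rfl, rfl⟩
    refine ⟨le_refl x, by simp, ?_⟩
    rintro (z | z) hxz hzx
    · exact Or.inl (congrArg Sum.inl (le_antisymm (hzx : z ≤ x) hxz))
    · exact Or.inr (congrArg Sum.inr (le_bot_iff.mp hzx))

theorem relCovBy_inr_inl_iff [OrderTop β] {x : β} {y : α} :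
    relCovBy (adjLE a b) (Sum.inr x : α ⊕ β) (Sum.inl y) ↔ x = ⊤ ∧ y = b := by
  constructor
  · rintro ⟨hby, -, hbetween⟩
    refine ⟨?_, ?_⟩
    · simpa [eq_comm] using hbetween (Sum.inr ⊤) (le_top : x ≤ ⊤) hby
    · simpa [eq_comm] using hbetween (Sum.inl b) (le_refl b) hby
  · rintro ⟨rfl, rfl⟩
    refine ⟨le_refl y, by simp, ?_⟩
    rintro (z | z) hyz hzy
    · exact Or.inr (congrArg Sum.inl (le_antisymm (hzy : z ≤ y) hyz))
    · exact Or.inl (congrArg Sum.inr (top_le_iff.mp hyz))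

variable [BoundedOrder β]

/-- `true` and `false` stand for the two new edges `a ⋖ ⊥` and `⊤ ⋖ b`. -/
def coverOfSum (hab : a < b) (hnc : ¬ a ⋖ b) :
    ({p : α × α // p.1 ⋖ p.2} ⊕ {p : β × β // p.1 ⋖ p.2}) ⊕ Bool →
      {p : (α ⊕ β) × (α ⊕ β) // relCovBy (adjLE a b) p.1 p.2}
  | .inl (.inl ⟨(x, y), h⟩) => ⟨(.inl x, .inl y), (relCovBy_inl_inl_iff hab hnc).mpr h⟩
  | .inl (.inr ⟨(x, y), h⟩) => ⟨(.inr x, .inr y), (relCovBy_inr_inr_iff hab.not_ge).mpr h⟩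
  | .inr true => ⟨(.inl a, .inr ⊥), relCovBy_inl_inr_iff.mpr ⟨rfl, rfl⟩⟩
  | .inr false => ⟨(.inr ⊤, .inl b), relCovBy_inr_inl_iff.mpr ⟨rfl, rfl⟩⟩

theorem coverOfSum_bijective (hab : a < b) (hnc : ¬ a ⋖ b) :
    Function.Bijective (coverOfSum (β := β) hab hnc) := by
  constructor
  · rintro (⟨⟨x, y⟩, h⟩ | ⟨⟨x, y⟩, h⟩ | _) (⟨⟨x', y'⟩, h'⟩ | ⟨⟨x', y'⟩, h'⟩ | _) heq <;>
      simp [coverOfSum, Subtype.ext_iff, Prod.ext_iff] at heq ⊢ <;> tauto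
  · rintro ⟨⟨x | x, y | y⟩, h⟩
    · exact ⟨.inl (.inl ⟨(x, y), (relCovBy_inl_inl_iff hab hnc).mp h⟩), rfl⟩
    · obtain ⟨rfl, rfl⟩ := relCovBy_inl_inr_iff.mp h
      exact ⟨.inr true, rfl⟩
    · obtain ⟨rfl, rfl⟩ := relCovBy_inr_inl_iff.mp h
      exact ⟨.inr false, rfl⟩
    · exact ⟨.inl (.inr ⟨(x, y), (relCovBy_inr_inr_iff hab.not_ge).mp h⟩), rfl⟩

theorem card_covers [Finite α] [Finite β] (hab : a < b) (hnc : ¬ a ⋖ b) :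
    Nat.card {p : (α ⊕ β) × (α ⊕ β) // relCovBy (adjLE a b) p.1 p.2} =
      edgeCount α + edgeCount β + 2 := by
  rw [← Nat.card_congr (Equiv.ofBijective _ (coverOfSum_bijective (β := β) hab hnc))]
  simp [edgeCount, Nat.card_sum]

end Adjunct

theorem stmt_10_general {α β : Type*} [Lattice α] [Lattice β] [Fintype α] [Fintype β]
    [Nonempty β] (a b : α) (hab : a < b) (hnc : ¬ a ⋖ b) :
    (Nat.card {p : (α ⊕ β) × (α ⊕ β) // relCovBy (adjLE a b) p.1 p.2} : ℤ) -
        Nat.card (α ⊕ β) + 1 = nullity α + nullity β + 1 := by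
  let : BoundedOrder β := Fintype.toBoundedOrder β
  rw [Adjunct.card_covers hab hnc, Nat.card_sum]
  unfold nullity
  push_cast
  ring

/-- If `L₁, L₂` are disjoint finite lattices and `a < b` in `L₁` with `a ⊀ b`, then
`η(L₁ ]ᵇₐ L₂) = η(L₁) + η(L₂) + 1`. -/
theorem stmt_10 {α β : Type*} [Lattice α] [Lattice β] [Fintype α] [Fintype β]
    [Nonempty α] [Nonempty β] (a b : α) (hab : a < b) (hnc : ¬ a ⋖ b) :
    (Nat.card {p : (α ⊕ β) × (α ⊕ β) // relCovBy (adjLE a b) p.1 p.2} : ℤ) -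
        Nat.card (α ⊕ β) + 1 = nullity α + nullity β + 1 :=
  stmt_10_general a b hab hnc
end

section
/- If a finite lattice L is an adjunct of l+1 chains, i.e., L = C₀ ]^{b₁}_{a₁} C₁ ]^{b₂}_{a₂} C₂ ⋯ ]^{b_l}_{a_l} C_l with each C_i a finite chain, then the nullity of L is exactly l. -/
/-- `IsAdjunctOfChains s l` : the subset `s` (with the induced order) is obtained from a
chain by `l` successive adjunct operations, each gluing a further chain `t` at an adjunct
pair `a < b` with `a ⊀ b` (so `s` is an adjunct of `l + 1` chains). -/
inductive IsAdjunctOfChains {α : Type*} [Lattice α] [DecidableEq α] : Finset α → ℕ → Prop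
  | chain (s : Finset α) (hs : s.Nonempty) (h : IsChain (· ≤ ·) (s : Set α)) :
      IsAdjunctOfChains s 0
  | adjunct (s t : Finset α) (l : ℕ) (a b : α)
      (hs : IsAdjunctOfChains s l)
      (ht : IsChain (· ≤ ·) (t : Set α)) (htne : t.Nonempty)
      (hdisj : Disjoint s t)
      (ha : a ∈ s) (hb : b ∈ s) (hab : a < b)
      (hnotcov : ∃ z ∈ s, a < z ∧ z < b)
      (horder : ∀ x ∈ s, ∀ y ∈ t, (x ≤ y ↔ x ≤ a) ∧ (y ≤ x ↔ b ≤ x)) :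
      IsAdjunctOfChains (s ∪ t) (l + 1)

/-!
Gluing a chain `t` into `s` at `a < b` keeps every covering pair of `s` and of `t` and adds
exactly the two edges `a ⋖ min t` and `max t ⋖ b`. A covering pair `x ⋖ y` of `s` survives
because an element of `t` strictly between them would force `x ≤ a` and `b ≤ y`, while `s`
already has an element strictly between `a` and `b`. Hence each gluing adds `#t` elements
and `#t + 1` edges, raising the nullity by one, and a single chain has nullity zero.
-/

open Finset

section CoverPairs

variable {α : Type*} [PartialOrder α]

open Classical in
noncomputable def coverPairs (s : Finset α) : Finset (α × α) :=
  (s ×ˢ s).filter fun p => p.1 < p.2 ∧ ∀ z ∈ s, ¬(p.1 < z ∧ z < p.2)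

theorem mem_coverPairs {s : Finset α} {p : α × α} :
    p ∈ coverPairs s ↔
      p.1 ∈ s ∧ p.2 ∈ s ∧ p.1 < p.2 ∧ ∀ z ∈ s, ¬(p.1 < z ∧ z < p.2) := by
  simp [coverPairs, and_assoc]

theorem edgeCount_eq_card_coverPairs_univ [Fintype α] :
    edgeCount α = #(coverPairs (univ : Finset α)) := by
  classical
  rw [edgeCount, Nat.card_eq_fintype_card, Fintype.card_subtype]
  congr 1
  ext p
  rw [mem_filter, mem_coverPairs]
  simp [CovBy]

theorem mem_coverPairs_of_subset {s u : Finset α} {p : α × α} (hsu : s ⊆ u)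
    (hp : p ∈ coverPairs u) (h₁ : p.1 ∈ s) (h₂ : p.2 ∈ s) : p ∈ coverPairs s := by
  obtain ⟨-, -, hlt, hcov⟩ := mem_coverPairs.1 hp
  exact mem_coverPairs.2 ⟨h₁, h₂, hlt, fun z hz => hcov z (hsu hz)⟩

theorem exists_mem_coverPairs_of_lt {s : Finset α} {x y : α} (hx : x ∈ s) (hy : y ∈ s)
    (hxy : x < y) : ∃ z, (x, z) ∈ coverPairs s := by
  classical
  obtain ⟨z, hz⟩ := (s.filter (x < ·)).exists_minimal ⟨y, mem_filter.2 ⟨hy, hxy⟩⟩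
  obtain ⟨hzs, hxz⟩ := mem_filter.1 hz.1
  refine ⟨z, mem_coverPairs.2 ⟨hx, hzs, hxz, ?_⟩⟩
  rintro w hw ⟨hxw, hwz⟩
  exact hwz.not_ge (hz.2 (mem_filter.2 ⟨hw, hxw⟩) hwz.le)

theorem exists_isGreatest_of_isChain {s : Finset α} (hs : s.Nonempty)
    (hc : IsChain (· ≤ ·) (s : Set α)) : ∃ M, IsGreatest (s : Set α) M :=
  let ⟨M, hM⟩ := s.exists_maximal hs
  ⟨M, hc.directedOn.maximal_iff_isGreatest.1 hM⟩

theorem exists_isLeast_of_isChain {s : Finset α} (hs : s.Nonempty)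
    (hc : IsChain (· ≤ ·) (s : Set α)) : ∃ m, IsLeast (s : Set α) m :=
  let ⟨m, hm⟩ := s.exists_minimal hs
  ⟨m, (IsChain.directedOn (r := fun x y => y ≤ x) hc.symm).minimal_iff_isLeast.1 hm⟩

theorem snd_eq_of_mem_coverPairs_of_isChain {s : Finset α} (hc : IsChain (· ≤ ·) (s : Set α))
    {x y y' : α} (h : (x, y) ∈ coverPairs s) (h' : (x, y') ∈ coverPairs s) : y = y' := by
  obtain ⟨-, hy, hxy, hcov⟩ := mem_coverPairs.1 h
  obtain ⟨-, hy', hxy', hcov'⟩ := mem_coverPairs.1 h'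
  by_contra hne
  rcases hc hy hy' hne with hle | hle
  · exact hcov' y hy ⟨hxy, hle.lt_of_ne hne⟩
  · exact hcov y' hy' ⟨hxy', hle.lt_of_ne (Ne.symm hne)⟩

theorem card_coverPairs_add_one_of_isChain [DecidableEq α] {s : Finset α} (hs : s.Nonempty)
    (hc : IsChain (· ≤ ·) (s : Set α)) : #(coverPairs s) + 1 = #s := by
  obtain ⟨M, hM⟩ := exists_isGreatest_of_isChain hs hc
  suffices #(coverPairs s) = #(s.erase M) by rw [this, card_erase_add_one hM.1]
  refine card_nbij Prod.fst (fun p hp => ?_) (fun p hp q hq hpq => ?_) (fun x hx => ?_)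
  · obtain ⟨h₁, h₂, hlt, -⟩ := mem_coverPairs.1 hp
    exact mem_erase.2 ⟨(hlt.trans_le (hM.2 h₂)).ne, h₁⟩
  · obtain ⟨x, y⟩ := p
    obtain ⟨x', y'⟩ := q
    obtain rfl : x = x' := hpq
    rw [snd_eq_of_mem_coverPairs_of_isChain hc hp hq]
  · obtain ⟨hxM, hxs⟩ := mem_erase.1 hx
    obtain ⟨z, hz⟩ := exists_mem_coverPairs_of_lt hxs hM.1 ((hM.2 hxs).lt_of_ne hxM)
    exact ⟨_, hz, rfl⟩

end CoverPairs

section Gluing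

variable {α : Type*} [PartialOrder α] {s t : Finset α} {a b m M : α}

/-- The order between the old part `s` and the new chain `t` of an adjunct `s ]ᵇₐ t`. -/
def GluedAt (s t : Finset α) (a b : α) : Prop :=
  ∀ x ∈ s, ∀ y ∈ t, (x ≤ y ↔ x ≤ a) ∧ (y ≤ x ↔ b ≤ x)

namespace GluedAt

theorem le_of_le (h : GluedAt s t a b) {x y : α} (hx : x ∈ s) (hy : y ∈ t) (hxy : x ≤ y) :
    x ≤ a :=
  (h x hx y hy).1.1 hxy

theorem le_of_ge (h : GluedAt s t a b) {x y : α} (hx : x ∈ s) (hy : y ∈ t) (hyx : y ≤ x) :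
    b ≤ x :=
  (h x hx y hy).2.1 hyx

theorem lt_of_mem_right (h : GluedAt s t a b) (ha : a ∈ s) (hab : a < b) {y : α} (hy : y ∈ t) :
    a < y :=
  ((h a ha y hy).1.2 le_rfl).lt_of_not_ge fun hya => hab.not_ge (h.le_of_ge ha hy hya)

theorem gt_of_mem_right (h : GluedAt s t a b) (hb : b ∈ s) (hab : a < b) {y : α} (hy : y ∈ t) :
    y < b :=
  ((h b hb y hy).2.2 le_rfl).lt_of_not_ge fun hby => hab.not_ge (h.le_of_le hb hy hby)

variable [DecidableEq α]

theorem mem_coverPairs_union_of_left (h : GluedAt s t a b) (hnotcov : ∃ z ∈ s, a < z ∧ z < b)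
    {p : α × α} (hp : p ∈ coverPairs s) : p ∈ coverPairs (s ∪ t) := by
  obtain ⟨h₁, h₂, hlt, hcov⟩ := mem_coverPairs.1 hp
  refine mem_coverPairs.2 ⟨mem_union_left _ h₁, mem_union_left _ h₂, hlt, ?_⟩
  rintro z hz ⟨hz₁, hz₂⟩
  rcases mem_union.1 hz with hzs | hzt
  · exact hcov z hzs ⟨hz₁, hz₂⟩
  · obtain ⟨w, hws, haw, hwb⟩ := hnotcov
    exact hcov w hws ⟨(h.le_of_le h₁ hzt hz₁.le).trans_lt haw,
      hwb.trans_le (h.le_of_ge h₂ hzt hz₂.le)⟩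

theorem mem_coverPairs_union_of_right (h : GluedAt s t a b) (hab : a < b)
    {p : α × α} (hp : p ∈ coverPairs t) : p ∈ coverPairs (s ∪ t) := by
  obtain ⟨h₁, h₂, hlt, hcov⟩ := mem_coverPairs.1 hp
  refine mem_coverPairs.2 ⟨mem_union_right _ h₁, mem_union_right _ h₂, hlt, ?_⟩
  rintro z hz ⟨hz₁, hz₂⟩
  rcases mem_union.1 hz with hzs | hzt
  · exact hab.not_ge ((h.le_of_ge hzs h₁ hz₁.le).trans (h.le_of_le hzs h₂ hz₂.le))
  · exact hcov z hzt ⟨hz₁, hz₂⟩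

theorem mem_coverPairs_union_bot (h : GluedAt s t a b) (ha : a ∈ s) (hab : a < b)
    (hm : IsLeast (t : Set α) m) : (a, m) ∈ coverPairs (s ∪ t) := by
  refine mem_coverPairs.2 ⟨mem_union_left _ ha, mem_union_right _ hm.1,
    h.lt_of_mem_right ha hab hm.1, ?_⟩
  rintro z hz ⟨haz, hzm⟩
  rcases mem_union.1 hz with hzs | hzt
  · exact haz.not_ge (h.le_of_le hzs hm.1 hzm.le)
  · exact hzm.not_ge (hm.2 hzt)

theorem mem_coverPairs_union_top (h : GluedAt s t a b) (hb : b ∈ s) (hab : a < b)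
    (hM : IsGreatest (t : Set α) M) : (M, b) ∈ coverPairs (s ∪ t) := by
  refine mem_coverPairs.2 ⟨mem_union_right _ hM.1, mem_union_left _ hb,
    h.gt_of_mem_right hb hab hM.1, ?_⟩
  rintro z hz ⟨hMz, hzb⟩
  rcases mem_union.1 hz with hzs | hzt
  · exact hzb.not_ge (h.le_of_ge hzs hM.1 hMz.le)
  · exact hMz.not_ge (hM.2 hzt)

theorem eq_bot_of_mem_coverPairs_union (h : GluedAt s t a b) (ha : a ∈ s) (hab : a < b)
    (hm : IsLeast (t : Set α) m) {x y : α} (hp : (x, y) ∈ coverPairs (s ∪ t)) (hx : x ∈ s)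
    (hy : y ∈ t) : (x, y) = (a, m) := by
  obtain ⟨-, -, hxy, hcov⟩ := mem_coverPairs.1 hp
  have hxa : x = a := by
    by_contra hne
    exact hcov a (mem_union_left _ ha)
      ⟨(h.le_of_le hx hy hxy.le).lt_of_ne hne, h.lt_of_mem_right ha hab hy⟩
  subst hxa
  have hym : y = m := by
    by_contra hne
    exact hcov m (mem_union_right _ hm.1)
      ⟨h.lt_of_mem_right ha hab hm.1, (hm.2 hy).lt_of_ne (Ne.symm hne)⟩
  rw [hym]

theorem eq_top_of_mem_coverPairs_union (h : GluedAt s t a b) (hb : b ∈ s) (hab : a < b)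
    (hM : IsGreatest (t : Set α) M) {x y : α} (hp : (x, y) ∈ coverPairs (s ∪ t))
    (hx : x ∈ t) (hy : y ∈ s) : (x, y) = (M, b) := by
  obtain ⟨-, -, hxy, hcov⟩ := mem_coverPairs.1 hp
  have hyb : y = b := by
    by_contra hne
    exact hcov b (mem_union_left _ hb)
      ⟨h.gt_of_mem_right hb hab hx, (h.le_of_ge hy hx hxy.le).lt_of_ne' hne⟩
  subst hyb
  have hxM : x = M := by
    by_contra hne
    exact hcov M (mem_union_right _ hM.1)
      ⟨(hM.2 hx).lt_of_ne hne, h.gt_of_mem_right hb hab hM.1⟩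
  rw [hxM]

theorem coverPairs_union (h : GluedAt s t a b) (ha : a ∈ s) (hb : b ∈ s)
    (hab : a < b) (hnotcov : ∃ z ∈ s, a < z ∧ z < b) (hm : IsLeast (t : Set α) m)
    (hM : IsGreatest (t : Set α) M) :
    coverPairs (s ∪ t) = coverPairs s ∪ coverPairs t ∪ {(a, m), (M, b)} := by
  ext ⟨x, y⟩
  simp only [mem_union, mem_insert, mem_singleton]
  constructor
  · intro hp
    obtain ⟨hx, hy, -⟩ := mem_coverPairs.1 hp
    rcases mem_union.1 hx with hx | hx <;> rcases mem_union.1 hy with hy | hy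
    · exact .inl (.inl (mem_coverPairs_of_subset subset_union_left hp hx hy))
    · exact .inr (.inl (h.eq_bot_of_mem_coverPairs_union ha hab hm hp hx hy))
    · exact .inr (.inr (h.eq_top_of_mem_coverPairs_union hb hab hM hp hx hy))
    · exact .inl (.inr (mem_coverPairs_of_subset subset_union_right hp hx hy))
  · rintro ((hp | hp) | hp | hp)
    · exact h.mem_coverPairs_union_of_left hnotcov hp
    · exact h.mem_coverPairs_union_of_right hab hp
    · exact hp ▸ h.mem_coverPairs_union_bot ha hab hm
    · exact hp ▸ h.mem_coverPairs_union_top hb hab hM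

theorem card_coverPairs_union (h : GluedAt s t a b) (hdisj : Disjoint s t)
    (ha : a ∈ s) (hb : b ∈ s) (hab : a < b) (hnotcov : ∃ z ∈ s, a < z ∧ z < b)
    (hm : IsLeast (t : Set α) m) (hM : IsGreatest (t : Set α) M) :
    #(coverPairs (s ∪ t)) = #(coverPairs s) + #(coverPairs t) + 2 := by
  have hnot : ∀ {x}, x ∈ s → x ∉ t := fun hx => disjoint_left.1 hdisj hx
  have hst : Disjoint (coverPairs s) (coverPairs t) :=
    disjoint_left.2 fun p hps hpt =>
      hnot (mem_coverPairs.1 hps).1 (mem_coverPairs.1 hpt).1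
  have hnew : Disjoint (coverPairs s ∪ coverPairs t) {(a, m), (M, b)} := by
    simp only [disjoint_insert_right, disjoint_singleton_right, mem_union, not_or]
    exact ⟨⟨fun hp => hnot (mem_coverPairs.1 hp).2.1 hm.1,
        fun hp => hnot ha (mem_coverPairs.1 hp).1⟩,
      fun hp => hnot (mem_coverPairs.1 hp).1 hM.1, fun hp => hnot hb (mem_coverPairs.1 hp).2.1⟩
  have hpair : (a, m) ≠ (M, b) := fun he => hnot ha ((Prod.mk.inj he).1 ▸ hM.1)
  rw [h.coverPairs_union ha hb hab hnotcov hm hM, card_union_of_disjoint hnew,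
    card_union_of_disjoint hst, card_pair hpair]

end GluedAt

end Gluing

theorem IsAdjunctOfChains.card_coverPairs_add_one {α : Type*} [Lattice α] [DecidableEq α]
    {s : Finset α} {l : ℕ} (h : IsAdjunctOfChains s l) : #(coverPairs s) + 1 = #s + l := by
  induction h with
  | chain s hs hc => exact card_coverPairs_add_one_of_isChain hs hc
  | adjunct s t l a b _ ht htne hdisj ha hb hab hnotcov horder ih =>
    obtain ⟨m, hm⟩ := exists_isLeast_of_isChain htne ht
    obtain ⟨M, hM⟩ := exists_isGreatest_of_isChain htne ht
    have hglued : GluedAt s t a b := horder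
    have ht_card := card_coverPairs_add_one_of_isChain htne ht
    rw [hglued.card_coverPairs_union hdisj ha hb hab hnotcov hm hM, card_union_of_disjoint hdisj]
    omega

/-- A finite lattice which is an adjunct of `l + 1` chains has nullity exactly `l`. -/
theorem stmt_11 {α : Type*} [Lattice α] [DecidableEq α] [Fintype α] (l : ℕ)
    (h : IsAdjunctOfChains (Finset.univ : Finset α) l) :
    nullity α = l := by
  have hcard := h.card_coverPairs_add_one
  rw [nullity, edgeCount_eq_card_coverPairs_univ, Nat.card_eq_fintype_card, ← card_univ]
  omega
end

section
/- Every finite lattice with exactly n elements and exactly n − 1 covering edges is a chain. -/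
section CoverUpper

variable {α : Type*} [PartialOrder α] [OrderBot α]

def covByUpper (e : {p : α × α // p.1 ⋖ p.2}) : {x : α // x ≠ ⊥} :=
  ⟨e.1.2, (bot_le.trans_lt e.2.lt).ne'⟩

theorem covByUpper_surjective [IsStronglyCoatomic α] :
    Function.Surjective (covByUpper (α := α)) := by
  rintro ⟨x, hx⟩
  obtain ⟨y, -, hyx⟩ := exists_le_covBy_of_lt (bot_lt_iff_ne_bot.2 hx)
  exact ⟨⟨(y, x), hyx⟩, rfl⟩

theorem covBy_left_unique_of_edgeCount_eq [Fintype α]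
    (hedges : edgeCount α = Fintype.card α - 1) {x y z : α} (hy : y ⋖ x) (hz : z ⋖ x) :
    y = z := by
  classical
  have hbij : Function.Bijective (covByUpper (α := α)) := by
    refine covByUpper_surjective.bijective_of_nat_card_le ?_
    rw [edgeCount] at hedges
    rw [hedges, Nat.card_eq_fintype_card, ← Set.card_ne_eq ⊥]
    rfl
  exact congrArg (·.1.1) (hbij.1 (a₁ := ⟨(y, x), hy⟩) (a₂ := ⟨(z, x), hz⟩) rfl)

end CoverUpper

theorem le_total_of_covBy_left_unique {α : Type*} [SemilatticeSup α] [IsStronglyCoatomic α]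
    (huniq : ∀ {x y z : α}, y ⋖ x → z ⋖ x → y = z) (a c : α) : a ≤ c ∨ c ≤ a := by
  by_contra! ⟨hac, hca⟩
  obtain ⟨y, hay, hy⟩ := exists_le_covBy_of_lt (left_lt_sup.2 hca)
  obtain ⟨z, hcz, hz⟩ := exists_le_covBy_of_lt (right_lt_sup.2 hac)
  obtain rfl : y = z := huniq hy hz
  exact hy.lt.not_ge (sup_le hay hcz)

/-- Every finite lattice with exactly `n` elements and exactly `n − 1` covering edges is a
chain, i.e. totally ordered. -/
theorem stmt_12 {α : Type*} [Lattice α] [Fintype α] [Nonempty α] (n : ℕ)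
    (hcard : Fintype.card α = n) (hedges : edgeCount α = n - 1) :
    ∀ x y : α, x ≤ y ∨ y ≤ x := by
  let := Fintype.toOrderBot α
  subst hcard
  exact le_total_of_covBy_left_unique (covBy_left_unique_of_edgeCount_eq hedges)
end

section
/- Let L be a finite lattice that is not a chain. Then L has a unique maximal sublattice B which is a block, and L has the form C ⊕ B, B ⊕ C, or C ⊕ B ⊕ C′ for chains C, C′; moreover η(L) = η(B). -/
/-- Covering edges of the subposet induced on a finset `s`. -/
noncomputable def edgeCountIn {α : Type*} [Preorder α] (s : Finset α) : ℕ :=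
  Nat.card {p : α × α //
    p.1 ∈ s ∧ p.2 ∈ s ∧ p.1 < p.2 ∧ ∀ z ∈ s, ¬(p.1 < z ∧ z < p.2)}

/-- The nullity of the subposet induced on a finset `s` (cover graph connected). -/
noncomputable def nullityIn {α : Type*} [Preorder α] (s : Finset α) : ℤ :=
  (edgeCountIn s : ℤ) - s.card + 1

/-- `s` is a sublattice: closed under `⊔` and `⊓`. -/
def IsSublat {α : Type*} [Lattice α] (s : Finset α) : Prop :=
  ∀ x ∈ s, ∀ y ∈ s, x ⊔ y ∈ s ∧ x ⊓ y ∈ s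

/-- `s` is a block: its greatest element is join-reducible in `s` and its least element is
meet-reducible in `s`. -/
def IsBlock {α : Type*} [Lattice α] (s : Finset α) : Prop :=
  (∃ m ∈ s, (∀ x ∈ s, x ≤ m) ∧ ∃ x ∈ s, ∃ y ∈ s, x < m ∧ y < m ∧ x ⊔ y = m) ∧
  (∃ m ∈ s, (∀ x ∈ s, m ≤ x) ∧ ∃ x ∈ s, ∃ y ∈ s, m < x ∧ m < y ∧ x ⊓ y = m)

/-!
The join-reducible elements of a lattice are closed under `⊔`, because two incomparable elements
have a join-reducible join; so a finite lattice has a greatest join-reducible element `hi` and,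
dually, a least meet-reducible element `lo`. For incomparable `x`, `y` we get `lo ≤ x ⊓ y` and
`x ⊔ y ≤ hi`, so every element outside `[lo, hi]` is comparable to all others, and `[lo, hi]` is a
block (the elements witnessing reducibility of `hi` and of `lo` are incomparable, hence lie in it).
The top of any block is join-reducible and its bottom meet-reducible, so every block lies in
`[lo, hi]`. An element below `lo` has only one upper cover, as two would make it meet-reducible;
dually above `hi`. Hence the cover edges not inside `[lo, hi]` are in bijection with the elements
outside it, and the nullity does not change.
-/

section Reducible

def IsSupReducible {α : Type*} [Lattice α] (a : α) : Prop := ∃ b c, b < a ∧ c < a ∧ b ⊔ c = a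

def IsInfReducible {α : Type*} [Lattice α] (a : α) : Prop := ∃ b c, a < b ∧ a < c ∧ b ⊓ c = a

variable {α : Type*} [Lattice α] {a b m x y : α}

lemma isSupReducible_sup (h : IncompRel (· ≤ ·) a b) : IsSupReducible (a ⊔ b) :=
  ⟨a, b, left_lt_sup.2 h.2, right_lt_sup.2 h.1, rfl⟩

lemma isInfReducible_inf (h : IncompRel (· ≤ ·) a b) : IsInfReducible (a ⊓ b) :=
  ⟨a, b, inf_lt_left.2 h.1, inf_lt_right.2 h.2, rfl⟩

lemma IsSupReducible.sup (ha : IsSupReducible a) (hb : IsSupReducible b) :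
    IsSupReducible (a ⊔ b) := by
  by_cases hab : a ≤ b
  · rwa [sup_eq_right.2 hab]
  by_cases hba : b ≤ a
  · rwa [sup_eq_left.2 hba]
  exact isSupReducible_sup ⟨hab, hba⟩

lemma IsInfReducible.inf (ha : IsInfReducible a) (hb : IsInfReducible b) :
    IsInfReducible (a ⊓ b) := by
  by_cases hab : a ≤ b
  · rwa [inf_eq_left.2 hab]
  by_cases hba : b ≤ a
  · rwa [inf_eq_right.2 hba]
  exact isInfReducible_inf ⟨hab, hba⟩

lemma incompRel_of_sup_eq (ha : a < m) (hb : b < m) (h : a ⊔ b = m) : IncompRel (· ≤ ·) a b := by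
  refine ⟨fun hab => hb.ne ?_, fun hba => ha.ne ?_⟩
  · rwa [sup_eq_right.2 hab] at h
  · rwa [sup_eq_left.2 hba] at h

lemma incompRel_of_inf_eq (ha : m < a) (hb : m < b) (h : a ⊓ b = m) : IncompRel (· ≤ ·) a b := by
  refine ⟨fun hab => ha.ne' ?_, fun hba => hb.ne' ?_⟩
  · rwa [inf_eq_left.2 hab] at h
  · rwa [inf_eq_right.2 hba] at h

lemma exists_isGreatest_isSupReducible [Finite α] (h : ∃ a : α, IsSupReducible a) :
    ∃ m : α, IsGreatest {a | IsSupReducible a} m := by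
  obtain ⟨m, hm⟩ := (Set.toFinite {a : α | IsSupReducible a}).exists_maximal h
  exact ⟨m, hm.1, fun a ha => le_sup_left.trans (hm.2 (ha.sup hm.1) le_sup_right)⟩

lemma exists_isLeast_isInfReducible [Finite α] (h : ∃ a : α, IsInfReducible a) :
    ∃ m : α, IsLeast {a | IsInfReducible a} m := by
  obtain ⟨m, hm⟩ := (Set.toFinite {a : α | IsInfReducible a}).exists_minimal h
  exact ⟨m, hm.1, fun a ha => (hm.2 (ha.inf hm.1) inf_le_right).trans inf_le_left⟩

lemma le_of_incompRel_of_mem_upperBounds (hm : m ∈ upperBounds {z | IsSupReducible z})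
    (h : IncompRel (· ≤ ·) x y) : x ≤ m :=
  le_sup_left.trans (hm (isSupReducible_sup h))

lemma le_of_incompRel_of_mem_lowerBounds (hm : m ∈ lowerBounds {z | IsInfReducible z})
    (h : IncompRel (· ≤ ·) x y) : m ≤ x :=
  (hm (isInfReducible_inf h)).trans inf_le_left

lemma lt_of_not_le_of_mem_upperBounds (hm : m ∈ upperBounds {z | IsSupReducible z})
    (hx : ¬ x ≤ m) : m < x := by
  by_contra hmx
  exact hx (le_of_incompRel_of_mem_upperBounds hm ⟨hx, fun h => hmx (h.lt_of_ne fun e => hx e.ge)⟩)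

lemma lt_of_not_le_of_mem_lowerBounds (hm : m ∈ lowerBounds {z | IsInfReducible z})
    (hx : ¬ m ≤ x) : x < m := by
  by_contra hxm
  exact hx (le_of_incompRel_of_mem_lowerBounds hm ⟨fun h => hxm (h.lt_of_ne fun e => hx e.ge), hx⟩)

lemma subsingleton_covBy_of_not_isInfReducible (hx : ¬ IsInfReducible x) :
    {y | x ⋖ y}.Subsingleton := by
  intro y hy z hz
  by_contra hne
  refine hx ⟨y, z, hy.lt, hz.lt, ?_⟩
  rcases hy.eq_or_eq (le_inf hy.le hz.le) inf_le_left with h | h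
  · exact h
  · exact absurd ((hz.eq_or_eq hy.le (inf_eq_left.1 h)).resolve_left hy.lt.ne') hne

lemma subsingleton_covBy_of_not_isSupReducible (hx : ¬ IsSupReducible x) :
    {y | y ⋖ x}.Subsingleton := by
  intro y hy z hz
  by_contra hne
  refine hx ⟨y, z, hy.lt, hz.lt, ?_⟩
  rcases hy.eq_or_eq le_sup_left (sup_le hy.le hz.le) with h | h
  · exact absurd ((hz.eq_or_eq (sup_eq_left.1 h) hy.le).resolve_right hy.lt.ne) hne
  · exact h

end Reducible

lemma Nat.card_eq_card_add_card_add_card {ι : Type*} [Finite ι] {p q : ι → Prop}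
    (h : ∀ x, p x → ¬ q x) :
    Nat.card ι = Nat.card {x // p x} + Nat.card {x // q x} + Nat.card {x // ¬ p x ∧ ¬ q x} := by
  classical
  have := Fintype.ofFinite ι
  simp only [Nat.card_eq_fintype_card, Fintype.card_subtype]
  rw [← Finset.card_univ, ← Finset.card_filter_add_card_filter_not (s := Finset.univ) p,
    ← Finset.card_filter_add_card_filter_not (s := Finset.univ.filter (¬ p ·)) q,
    Finset.filter_filter, Finset.filter_filter,
    Finset.filter_congr (p := fun x => ¬ p x ∧ q x) (q := q)]
  · ring
  · exact fun x _ => ⟨And.right, fun hq => ⟨fun hp => h x hp hq, hq⟩⟩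

section Counting

variable {α : Type*} [PartialOrder α] [Finite α] {a b : α}

lemma card_covBy_fst_lt (hup : ∀ x < a, {y | x ⋖ y}.Subsingleton) :
    Nat.card {e : {p : α × α // p.1 ⋖ p.2} // e.1.1 < a} = Nat.card {x // x < a} := by
  refine Nat.card_eq_of_bijective (fun e => ⟨e.1.1.1, e.2⟩) ⟨?_, fun ⟨x, hx⟩ => ?_⟩
  · rintro ⟨⟨⟨x, y⟩, hxy⟩, hx⟩ ⟨⟨⟨x', y'⟩, hxy'⟩, _⟩ hxx'
    obtain rfl : x = x' := congrArg Subtype.val hxx'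
    obtain rfl : y = y' := hup x hx hxy hxy'
    rfl
  · obtain ⟨y, hxy, -⟩ := exists_covBy_le_of_lt hx
    exact ⟨⟨⟨(x, y), hxy⟩, hx⟩, rfl⟩

lemma card_covBy_lt_snd (hdown : ∀ x, b < x → {y | y ⋖ x}.Subsingleton) :
    Nat.card {e : {p : α × α // p.1 ⋖ p.2} // b < e.1.2} = Nat.card {x // b < x} := by
  refine Nat.card_eq_of_bijective (fun e => ⟨e.1.1.2, e.2⟩) ⟨?_, fun ⟨x, hx⟩ => ?_⟩
  · rintro ⟨⟨⟨y, x⟩, hyx⟩, hx⟩ ⟨⟨⟨y', x'⟩, hyx'⟩, _⟩ hxx'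
    obtain rfl : x = x' := congrArg Subtype.val hxx'
    obtain rfl : y = y' := hdown x hx hyx hyx'
    rfl
  · obtain ⟨y, -, hyx⟩ := exists_le_covBy_of_lt hx
    exact ⟨⟨⟨(y, x), hyx⟩, hx⟩, rfl⟩

theorem nullity_eq_nullityIn_of_subsingleton_covers {s : Finset α} (hs : (s : Set α) = Set.Icc a b)
    (hab : a ≤ b) (hlow : ∀ x, ¬ a ≤ x → x < a) (hhigh : ∀ x, ¬ x ≤ b → b < x)
    (hup : ∀ x < a, {y | x ⋖ y}.Subsingleton) (hdown : ∀ x, b < x → {y | y ⋖ x}.Subsingleton) :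
    nullity α = nullityIn s := by
  have hmem : ∀ x, x ∈ s ↔ ¬ x < a ∧ ¬ b < x := fun x => by
    rw [← Finset.mem_coe, hs, Set.mem_Icc]
    exact ⟨fun h => ⟨h.1.not_gt, h.2.not_gt⟩,
      fun h => ⟨not_not.1 (mt (hlow x) h.1), not_not.1 (mt (hhigh x) h.2)⟩⟩
  have hedges : edgeCount α = Nat.card {x // x < a} + Nat.card {x // b < x} + edgeCountIn s := by
    rw [edgeCount,
      Nat.card_eq_card_add_card_add_card (p := fun e => e.1.1 < a) (q := fun e => b < e.1.2)
      fun e h1 h2 => e.2.2 h1 (hab.trans_lt h2), card_covBy_fst_lt hup, card_covBy_lt_snd hdown,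
      edgeCountIn]
    congr 1
    refine Nat.card_congr ((Equiv.subtypeSubtypeEquivSubtypeInter (fun p : α × α => p.1 ⋖ p.2)
      fun p => ¬ p.1 < a ∧ ¬ b < p.2).trans
      (Equiv.subtypeEquivRight fun p => ?_))
    simp only [hmem]
    constructor
    · rintro ⟨hp, h1, h2⟩
      exact ⟨⟨h1, fun h => h2 (h.trans hp.lt)⟩, ⟨fun h => h1 (hp.lt.trans h), h2⟩, hp.lt,
        fun z _ hz => hp.2 hz.1 hz.2⟩
    · rintro ⟨⟨h1, -⟩, ⟨-, h2⟩, hlt, hbetween⟩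
      refine ⟨⟨hlt, fun z h1z hz2 => hbetween z ?_ ⟨h1z, hz2⟩⟩, h1, h2⟩
      exact ⟨fun h => h1 (h1z.trans h), fun h => h2 (h.trans hz2)⟩
  have hverts : Nat.card α = Nat.card {x // x < a} + Nat.card {x // b < x} + s.card := by
    rw [Nat.card_eq_card_add_card_add_card (p := (· < a)) (q := (b < ·))
      fun x h1 h2 => (h1.trans_le hab).not_gt h2, ← Nat.card_eq_finsetCard]
    exact congrArg _ (Nat.card_congr (Equiv.subtypeEquivRight fun x => (hmem x).symm))
  rw [nullity, nullityIn, hedges, hverts]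
  push_cast
  ring

end Counting

section Block

variable {α : Type*} [Lattice α] {lo hi x : α} {s : Finset α}

lemma isSublat_of_coe_eq_Icc (hs : (s : Set α) = Set.Icc lo hi) : IsSublat s := by
  intro x hx y hy
  simp only [← Finset.mem_coe, hs, Set.mem_Icc] at hx hy ⊢
  exact ⟨⟨le_sup_of_le_left hx.1, sup_le hx.2 hy.2⟩, ⟨le_inf hx.1 hy.1, inf_le_of_left_le hx.2⟩⟩

lemma isBlock_of_coe_eq_Icc (hlo : IsLeast {z | IsInfReducible z} lo)
    (hhi : IsGreatest {z | IsSupReducible z} hi) (hs : (s : Set α) = Set.Icc lo hi) :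
    IsBlock s := by
  have hmem : ∀ x, x ∈ s ↔ lo ≤ x ∧ x ≤ hi := fun x => by rw [← Finset.mem_coe, hs, Set.mem_Icc]
  obtain ⟨u, v, hu, hv, huv⟩ := hhi.1
  obtain ⟨u', v', hu', hv', huv'⟩ := hlo.1
  have hinc := incompRel_of_sup_eq hu hv huv
  have hinc' := incompRel_of_inf_eq hu' hv' huv'
  have hle : lo ≤ hi := (le_of_incompRel_of_mem_lowerBounds hlo.2 hinc).trans hu.le
  refine ⟨⟨hi, (hmem hi).2 ⟨hle, le_rfl⟩, fun x hx => ((hmem x).1 hx).2,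
    u, (hmem u).2 ⟨le_of_incompRel_of_mem_lowerBounds hlo.2 hinc, hu.le⟩,
    v, (hmem v).2 ⟨le_of_incompRel_of_mem_lowerBounds hlo.2 hinc.symm, hv.le⟩, hu, hv, huv⟩,
    ⟨lo, (hmem lo).2 ⟨le_rfl, hle⟩, fun x hx => ((hmem x).1 hx).1,
    u', (hmem u').2 ⟨hu'.le, le_of_incompRel_of_mem_upperBounds hhi.2 hinc'⟩,
    v', (hmem v').2 ⟨hv'.le, le_of_incompRel_of_mem_upperBounds hhi.2 hinc'.symm⟩, hu', hv', huv'⟩⟩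

variable (hlo : lo ∈ lowerBounds {z | IsInfReducible z})
  (hhi : hi ∈ upperBounds {z | IsSupReducible z}) (hs : (s : Set α) = Set.Icc lo hi)
include hlo hhi hs

lemma subset_of_isBlock {t : Finset α} (ht : IsBlock t) : t ⊆ s := by
  obtain ⟨⟨M, -, hM, u, -, v, -, hu, hv, huv⟩, ⟨N, -, hN, u', -, v', -, hu', hv', huv'⟩⟩ := ht
  intro x hx
  rw [← Finset.mem_coe, hs]
  exact ⟨(hlo ⟨u', v', hu', hv', huv'⟩).trans (hN x hx), (hM x hx).trans (hhi ⟨u, v, hu, hv, huv⟩)⟩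

lemma forall_lt_or_forall_lt_of_notMem (hx : x ∉ s) : (∀ y ∈ s, x < y) ∨ (∀ y ∈ s, y < x) := by
  rw [← Finset.mem_coe, hs, Set.mem_Icc, not_and_or] at hx
  refine hx.imp (fun hx y hy => ?_) (fun hx y hy => ?_) <;> rw [← Finset.mem_coe, hs] at hy
  · exact (lt_of_not_le_of_mem_lowerBounds hlo hx).trans_le hy.1
  · exact hy.2.trans_lt (lt_of_not_le_of_mem_upperBounds hhi hx)

lemma le_or_ge_of_notMem (hx : x ∉ s) (y : α) : x ≤ y ∨ y ≤ x := by
  by_contra h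
  rw [not_or] at h
  rw [← Finset.mem_coe, hs] at hx
  exact hx ⟨le_of_incompRel_of_mem_lowerBounds hlo h, le_of_incompRel_of_mem_upperBounds hhi h⟩

theorem nullity_eq_nullityIn_of_coe_eq_Icc [Finite α] (hle : lo ≤ hi) : nullity α = nullityIn s :=
  nullity_eq_nullityIn_of_subsingleton_covers hs hle
    (fun _ => lt_of_not_le_of_mem_lowerBounds hlo) (fun _ => lt_of_not_le_of_mem_upperBounds hhi)
    (fun _ hx => subsingleton_covBy_of_not_isInfReducible fun h => (hlo h).not_gt hx)
    (fun _ hx => subsingleton_covBy_of_not_isSupReducible fun h => (hhi h).not_gt hx)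

end Block

theorem stmt_13_general {α : Type*} [Lattice α] [Fintype α]
    (hnc : ¬ IsChain (· ≤ ·) (Set.univ : Set α)) :
    ∃! B : Finset α,
      (IsSublat B ∧ IsBlock B ∧ ∀ B' : Finset α, IsSublat B' → IsBlock B' → B' ⊆ B) ∧
      (∀ x, x ∉ B → (∀ y ∈ B, x < y) ∨ (∀ y ∈ B, y < x)) ∧
      (∀ x, x ∉ B → ∀ y, y ∉ B → x ≤ y ∨ y ≤ x) ∧
      nullity α = nullityIn B := by
  obtain ⟨a, b, hab⟩ : ∃ a b : α, IncompRel (· ≤ ·) a b := by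
    by_contra! h
    exact hnc fun x _ y _ _ => not_incompRel_iff_symmGen.1 (h x y)
  obtain ⟨lo, hlo⟩ := exists_isLeast_isInfReducible ⟨_, isInfReducible_inf hab⟩
  obtain ⟨hi, hhi⟩ := exists_isGreatest_isSupReducible ⟨_, isSupReducible_sup hab⟩
  have hle : lo ≤ hi := (le_of_incompRel_of_mem_lowerBounds hlo.2 hab).trans
    (le_of_incompRel_of_mem_upperBounds hhi.2 hab)
  have hs := (Set.toFinite (Set.Icc lo hi)).coe_toFinset
  have hsub := isSublat_of_coe_eq_Icc hs
  have hblock := isBlock_of_coe_eq_Icc hlo hhi hs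
  refine ⟨_, ⟨⟨hsub, hblock, fun _ _ => subset_of_isBlock hlo.2 hhi.2 hs⟩,
    fun _ => forall_lt_or_forall_lt_of_notMem hlo.2 hhi.2 hs,
    fun _ hx y _ => le_or_ge_of_notMem hlo.2 hhi.2 hs hx y,
    nullity_eq_nullityIn_of_coe_eq_Icc hlo.2 hhi.2 hs hle⟩, ?_⟩
  rintro t ⟨⟨-, ht, hmax⟩, -⟩
  exact (subset_of_isBlock hlo.2 hhi.2 hs ht).antisymm (hmax _ hsub hblock)

/-- A finite lattice `L` which is not a chain has a unique maximal sublattice `B` which is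
a block; every element outside `B` is below or above all of `B`, the elements outside `B`
form chains, and `η(L) = η(B)`. -/
theorem stmt_13 {α : Type*} [Lattice α] [Fintype α] [Nonempty α]
    (hnc : ¬ IsChain (· ≤ ·) (Set.univ : Set α)) :
    ∃! B : Finset α,
      (IsSublat B ∧ IsBlock B ∧ ∀ B' : Finset α, IsSublat B' → IsBlock B' → B' ⊆ B) ∧
      (∀ x, x ∉ B → (∀ y ∈ B, x < y) ∨ (∀ y ∈ B, y < x)) ∧
      (∀ x, x ∉ B → ∀ y, y ∉ B → x ≤ y ∨ y ≤ x) ∧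
      nullity α = nullityIn B :=
  stmt_13_general hnc
end

section
/- In a finite lattice L of nullity k with at least one reducible element, the number r of reducible elements satisfies 2 ≤ r, i.e., join-reducible and meet-reducible elements cannot exist alone: if some element is join-reducible then some element is meet-reducible, and conversely. -/
/-! Both kinds of reducible element exist exactly when the lattice is not a chain: a proper
join `b ⊔ c` forces `b` and `c` to be incomparable, and an incomparable pair `x, y` makes
`x ⊔ y` join-reducible and `x ⊓ y` meet-reducible. These two elements differ, since
`x ⊔ y = x ⊓ y` would force `x = y`. -/

/-- `x` is reducible: join-reducible or meet-reducible. -/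
def isRed {α : Type*} [Lattice α] (x : α) : Prop :=
  (∃ b c, b ≠ x ∧ c ≠ x ∧ b ⊔ c = x) ∨ (∃ b c, b ≠ x ∧ c ≠ x ∧ b ⊓ c = x)

section Lattice

variable {α : Type*} [Lattice α]

lemma exists_sup_eq_of_ne_iff_exists_incompRel :
    (∃ a b c : α, b ≠ a ∧ c ≠ a ∧ b ⊔ c = a) ↔ ∃ x y : α, IncompRel (· ≤ ·) x y := by
  constructor
  · rintro ⟨_, b, c, hb, hc, rfl⟩
    exact ⟨b, c, fun h => hc (sup_eq_right.2 h).symm, fun h => hb (sup_eq_left.2 h).symm⟩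
  · rintro ⟨x, y, hxy, hyx⟩
    exact ⟨x ⊔ y, x, y, fun h => hyx (sup_eq_left.1 h.symm),
      fun h => hxy (sup_eq_right.1 h.symm), rfl⟩

lemma exists_inf_eq_of_ne_iff_exists_incompRel :
    (∃ a b c : α, b ≠ a ∧ c ≠ a ∧ b ⊓ c = a) ↔ ∃ x y : α, IncompRel (· ≤ ·) x y := by
  constructor
  · rintro ⟨_, b, c, hb, hc, rfl⟩
    exact ⟨b, c, fun h => hb (inf_eq_left.2 h).symm, fun h => hc (inf_eq_right.2 h).symm⟩
  · rintro ⟨x, y, hxy, hyx⟩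
    exact ⟨x ⊓ y, x, y, fun h => hxy (inf_eq_left.1 h.symm),
      fun h => hyx (inf_eq_right.1 h.symm), rfl⟩

lemma exists_incompRel_of_isRed {a : α} (ha : isRed a) :
    ∃ x y : α, IncompRel (· ≤ ·) x y := by
  rcases ha with ⟨b, c, hbc⟩ | ⟨b, c, hbc⟩
  · exact exists_sup_eq_of_ne_iff_exists_incompRel.1 ⟨a, b, c, hbc⟩
  · exact exists_inf_eq_of_ne_iff_exists_incompRel.1 ⟨a, b, c, hbc⟩

lemma isRed_sup_of_incompRel {x y : α} (h : IncompRel (· ≤ ·) x y) : isRed (x ⊔ y) :=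
  Or.inl ⟨x, y, fun hx => h.2 (sup_eq_left.1 hx.symm), fun hy => h.1 (sup_eq_right.1 hy.symm),
    rfl⟩

lemma isRed_inf_of_incompRel {x y : α} (h : IncompRel (· ≤ ·) x y) : isRed (x ⊓ y) :=
  Or.inr ⟨x, y, fun hx => h.1 (inf_eq_left.1 hx.symm), fun hy => h.2 (inf_eq_right.1 hy.symm),
    rfl⟩

lemma nontrivial_isRed_of_isRed {a : α} (ha : isRed a) : Nontrivial {x : α // isRed x} := by
  obtain ⟨x, y, hxy⟩ := exists_incompRel_of_isRed ha
  refine ⟨⟨x ⊔ y, isRed_sup_of_incompRel hxy⟩, ⟨x ⊓ y, isRed_inf_of_incompRel hxy⟩, fun h => ?_⟩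
  have hxy_eq : x = y := inf_eq_sup.1 (congrArg Subtype.val h).symm
  exact hxy.1 hxy_eq.le

end Lattice

/-- In a finite lattice, a join-reducible element exists iff a meet-reducible element
exists; consequently, if there is at least one reducible element then there are at
least two. -/
theorem stmt_16 {α : Type*} [Lattice α] [Fintype α] :
    ((∃ a b c : α, b ≠ a ∧ c ≠ a ∧ b ⊔ c = a) ↔
      (∃ a b c : α, b ≠ a ∧ c ≠ a ∧ b ⊓ c = a)) ∧
    ((∃ a : α, isRed a) → 2 ≤ Nat.card {x : α // isRed x}) := by
  refine ⟨exists_sup_eq_of_ne_iff_exists_incompRel.trans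
    exists_inf_eq_of_ne_iff_exists_incompRel.symm, ?_⟩
  rintro ⟨a, ha⟩
  exact Finite.one_lt_card_iff_nontrivial.2 (nontrivial_isRed_of_isRed ha)
end
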